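/- arXiv:1902.06109 — 13 statements merged into one kernel-verified Lean document; each statement's English description precedes it below -/
import Mathlib

section
/- Let P be a semigroupoid. Then every element of P has a preinverse if and only if every element of P has a pseudoinverse. -/
namespace PaperMagmoid

variable {P : Type*}

/-- Extension of a partial binary operation `m : P → P → Option P` to
`Option`-valued arguments, used to express compound products like `x(yz)`. -/
def ob (m : P → P → Option P) : Option P → Option P → Option P :=
  fun a b => a.bind fun x => b.bind fun y => m x y

/-- A semigroupoid: if `x(yz)` is defined, or `(xy)z` is defined, or both `xy` and
`yz` are defined, then both `x(yz)` and `(xy)z` are defined and equal. -/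
def IsSemigroupoid (m : P → P → Option P) : Prop :=
  ∀ x y z : P,
    ((ob m (some x) (m y z)).isSome ∨ (ob m (m x y) (some z)).isSome ∨
      ((m x y).isSome ∧ (m y z).isSome)) →
    (ob m (some x) (m y z)).isSome ∧ (ob m (m x y) (some z)).isSome ∧
      ob m (some x) (m y z) = ob m (m x y) (some z)

/-- A left semigroupoid: if `x(yz)` is defined then `(xy)z` is defined and equal,
and if `xy` and `yz` are defined then both `x(yz)` and `(xy)z` are defined and equal. -/
def IsLeftSemigroupoid (m : P → P → Option P) : Prop :=
  (∀ x y z : P, (ob m (some x) (m y z)).isSome →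
    (ob m (m x y) (some z)).isSome ∧ ob m (some x) (m y z) = ob m (m x y) (some z)) ∧
  (∀ x y z : P, (m x y).isSome → (m y z).isSome →
    (ob m (some x) (m y z)).isSome ∧ (ob m (m x y) (some z)).isSome ∧
      ob m (some x) (m y z) = ob m (m x y) (some z))

/-- `l` is a local left unit for `x`: `lx` is defined and `lx = x`. -/
def IsLocalLeftUnit (m : P → P → Option P) (l x : P) : Prop := m l x = some x

/-- `r` is a local right unit for `x`: `xr` is defined and `xr = x`. -/
def IsLocalRightUnit (m : P → P → Option P) (r x : P) : Prop := m x r = some x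

/-- A prepoloid: a semigroupoid where every element has a local left unit
and a local right unit. -/
def IsPrepoloid (m : P → P → Option P) : Prop :=
  IsSemigroupoid m ∧
    ∀ x : P, (∃ l, IsLocalLeftUnit m l x) ∧ (∃ r, IsLocalRightUnit m r x)

/-- `x'` is a preinverse of `x`: `xx'` and `x'x` are defined,
`(xx')x = x(x'x) = x` and `(x'x)x' = x'(xx') = x'`. -/
def IsPreinverse (m : P → P → Option P) (x x' : P) : Prop :=
  (m x x').isSome ∧ (m x' x).isSome ∧
  ob m (m x x') (some x) = some x ∧ ob m (some x) (m x' x) = some x ∧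
  ob m (m x' x) (some x') = some x' ∧ ob m (some x') (m x x') = some x'

/-- `x'` is a pseudoinverse of `x`: `(xx')x` and `x(x'x)` are defined and equal `x`. -/
def IsPseudoinverse (m : P → P → Option P) (x x' : P) : Prop :=
  ob m (m x x') (some x) = some x ∧ ob m (some x) (m x' x) = some x

/-- A pregroupoid: a prepoloid in which every element has a preinverse. -/
def IsPregroupoid (m : P → P → Option P) : Prop :=
  IsPrepoloid m ∧ ∀ x : P, ∃ x', IsPreinverse m x x'

/-- Preinverses are unique. -/
def HasUniquePreinverses (m : P → P → Option P) : Prop :=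
  ∀ x x' x'' : P, IsPreinverse m x x' → IsPreinverse m x x'' → x' = x''

/-- `i` is an idempotent: `ii` is defined and `ii = i`. -/
def IsIdempotent (m : P → P → Option P) (i : P) : Prop := m i i = some i

/-- `e` is a (global) two-sided unit: `ex = x` whenever `ex` is defined and
`xe = x` whenever `xe` is defined. -/
def IsTwoSidedUnit (m : P → P → Option P) (e : P) : Prop :=
  (∀ x y : P, m e x = some y → y = x) ∧ (∀ x y : P, m x e = some y → y = x)

/-- `l` is a left effective unit for `x`: a two-sided unit with `lx = x` defined. -/
def IsLeftEffectiveUnit (m : P → P → Option P) (l x : P) : Prop :=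
  IsTwoSidedUnit m l ∧ m l x = some x

/-- `r` is a right effective unit for `x`: a two-sided unit with `xr = x` defined. -/
def IsRightEffectiveUnit (m : P → P → Option P) (r x : P) : Prop :=
  IsTwoSidedUnit m r ∧ m x r = some x

/-- A poloid: a semigroupoid where every element has a left effective unit
and a right effective unit. -/
def IsPoloid (m : P → P → Option P) : Prop :=
  IsSemigroupoid m ∧
    ∀ x : P, (∃ l, IsLeftEffectiveUnit m l x) ∧ (∃ r, IsRightEffectiveUnit m r x)

/-- `x'` is a strong preinverse of `x`: a preinverse such that `xx'` and `x'x`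
are two-sided units. -/
def IsStrongPreinverse (m : P → P → Option P) (x x' : P) : Prop :=
  IsPreinverse m x x' ∧
  (∀ u, m x x' = some u → IsTwoSidedUnit m u) ∧
  (∀ v, m x' x = some v → IsTwoSidedUnit m v)

/-- `x'` is a strong pseudoinverse of `x`: a pseudoinverse such that `xx'` is a
left effective unit for `x` and `x'x` is a right effective unit for `x`
(in particular, two-sided units). -/
def IsStrongPseudoinverse (m : P → P → Option P) (x x' : P) : Prop :=
  IsPseudoinverse m x x' ∧
  (∀ u, m x x' = some u → IsLeftEffectiveUnit m u x) ∧
  (∀ v, m x' x = some v → IsRightEffectiveUnit m v x)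

/-- A groupoid: a poloid in which every element has a strong preinverse. -/
def IsGroupoid (m : P → P → Option P) : Prop :=
  IsPoloid m ∧ ∀ x : P, ∃ x', IsStrongPreinverse m x x'

/-- `e` is a global right unit: `xe = x` whenever `xe` is defined. -/
def IsGlobalRightUnit (m : P → P → Option P) (e : P) : Prop :=
  ∀ x y : P, m x e = some y → y = x

/-- `φ` is a twisted left unit for `x`: a local left unit for `x` which is a
global right unit. -/
def IsTwistedLeftUnit (m : P → P → Option P) (φ x : P) : Prop :=
  IsGlobalRightUnit m φ ∧ m φ x = some x

/-- A left skew-poloid: a left semigroupoid in which every element has exactly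
one twisted left unit. -/
def IsLeftSkewPoloid (m : P → P → Option P) : Prop :=
  IsLeftSemigroupoid m ∧ ∀ x : P, ∃! φ, IsTwistedLeftUnit m φ x

/-- `x'` is a right preinverse of `x`: `xx'` and `x'x` are defined,
`(xx')x = x` and `(x'x)x' = x'`. -/
def IsRightPreinverse (m : P → P → Option P) (x x' : P) : Prop :=
  (m x x').isSome ∧ (m x' x).isSome ∧
  ob m (m x x') (some x) = some x ∧ ob m (m x' x) (some x') = some x'

/-- `x'` is a strong right preinverse of `x`: a right preinverse such that `xx'`
and `x'x` are global right units. -/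
def IsStrongRightPreinverse (m : P → P → Option P) (x x' : P) : Prop :=
  IsRightPreinverse m x x' ∧
  (∀ u, m x x' = some u → IsGlobalRightUnit m u) ∧
  (∀ v, m x' x = some v → IsGlobalRightUnit m v)

/-- A left skew-groupoid: a left skew-poloid in which every element has a strong
right preinverse, and any two strong right preinverses `x'`, `x''` of `x`
satisfy `x'x = x''x`. -/
def IsLeftSkewGroupoid (m : P → P → Option P) : Prop :=
  IsLeftSkewPoloid m ∧ (∀ x : P, ∃ x', IsStrongRightPreinverse m x x') ∧
  ∀ x x' x'' : P, IsStrongRightPreinverse m x x' → IsStrongRightPreinverse m x x'' →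
    m x' x = m x'' x

/-- In a semigroupoid, every element has a preinverse iff every
element has a pseudoinverse. -/
theorem semigroupoid_preinverse_iff_pseudoinverse {P : Type*}
    (m : P → P → Option P) (h : IsSemigroupoid m) :
    (∀ x : P, ∃ x', IsPreinverse m x x') ↔ (∀ x : P, ∃ x', IsPseudoinverse m x x') := by
  constructor
  · intro hp x
    obtain ⟨x', _, _, h3, h4, _, _⟩ := hp x
    exact ⟨x', h3, h4⟩
  · intro hp x
    obtain ⟨y, hy1, hy2⟩ := hp x
    -- extract u = x y with u x = x
    obtain ⟨u, hu, hux⟩ : ∃ u, m x y = some u ∧ m u x = some x := by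
      cases hu : m x y with
      | none => simp [ob, hu] at hy1
      | some u => exact ⟨u, rfl, by simpa [ob, hu] using hy1⟩
    -- extract v = y x with x v = x
    obtain ⟨v, hv, hxv⟩ : ∃ v, m y x = some v ∧ m x v = some x := by
      cases hv : m y x with
      | none => simp [ob, hv] at hy2
      | some v => exact ⟨v, rfl, by simpa [ob, hv] using hy2⟩
    -- w := y u = v y exists
    obtain ⟨_, _, heq⟩ := h y x y (Or.inr (Or.inr ⟨by simp [hv], by simp [hu]⟩))
    rw [hu, hv] at heq
    simp only [ob, Option.bind_some] at heq
    have hdef : (m y u).isSome := by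
      obtain ⟨h1, _, _⟩ := h y x y (Or.inr (Or.inr ⟨by simp [hv], by simp [hu]⟩))
      rw [hu] at h1
      simpa [ob] using h1
    obtain ⟨w, hyu⟩ := Option.isSome_iff_exists.mp hdef
    have hvy : m v y = some w := by rw [← heq, hyu]
    -- u is idempotent : u u = u
    have huu : m u u = some u := by
      obtain ⟨_, _, he⟩ := h u x y (Or.inr (Or.inr ⟨by simp [hux], by simp [hu]⟩))
      rw [hu, hux] at he
      simpa [ob, hu] using he
    -- v is idempotent : v v = v
    have hvv : m v v = some v := by
      obtain ⟨_, _, he⟩ := h y x v (Or.inr (Or.inr ⟨by simp [hv], by simp [hxv]⟩))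
      rw [hv, hxv] at he
      simpa [ob, hv] using he.symm
    -- x w = u  (x (y u) = (x y) u = u u = u)
    have hxw : m x w = some u := by
      obtain ⟨_, _, he⟩ := h x y u (Or.inr (Or.inr ⟨by simp [hu], by simp [hyu]⟩))
      rw [hu, hyu] at he
      simpa [ob, huu] using he
    -- w x = v  ((v y) x = v (y x) = v v = v)
    have hwx : m w x = some v := by
      obtain ⟨_, _, he⟩ := h v y x (Or.inr (Or.inr ⟨by simp [hvy], by simp [hv]⟩))
      rw [hv, hvy] at he
      simpa [ob, hvv] using he.symm
    -- v w = w  (v (v y) = (v v) y = v y = w)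
    have hvw : m v w = some w := by
      obtain ⟨_, _, he⟩ := h v v y (Or.inr (Or.inr ⟨by simp [hvv], by simp [hvy]⟩))
      rw [hvv, hvy] at he
      simpa [ob, hvy] using he
    -- w u = w  ((y u) u = y (u u) = y u = w)
    have hwu : m w u = some w := by
      obtain ⟨_, _, he⟩ := h y u u (Or.inr (Or.inr ⟨by simp [hyu], by simp [huu]⟩))
      rw [huu, hyu] at he
      simpa [ob, hyu] using he.symm
    refine ⟨w, by simp [hxw], by simp [hwx], ?_, ?_, ?_, ?_⟩ <;>
      simp [ob, hxw, hwx, hux, hxv, hvw, hwu]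

end PaperMagmoid
end

section
/- Let P be a pregroupoid with unique preinverses, and let i, j ∈ P be idempotents such that (ij)↓. Then ij and ji are both defined and are idempotents. -/
namespace PaperMagmoid

variable {P : Type*}

/-- Auxiliary: three-fold associativity when both pairwise products are defined. -/
theorem aux_assoc3 {m : P → P → Option P} (hsg : IsSemigroupoid m) {x y z p q : P}
    (h1 : m x y = some p) (h2 : m y z = some q) :
    ∃ r, m p z = some r ∧ m x q = some r := by
  obtain ⟨hs1, hs2, heq⟩ := hsg x y z (Or.inr (Or.inr ⟨by simp [h1], by simp [h2]⟩))
  simp only [ob, h1, h2, Option.bind_some, Option.bind_some] at hs2 heq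
  obtain ⟨r, hr⟩ := Option.isSome_iff_exists.mp hs2
  exact ⟨r, hr, heq.trans hr⟩

/-- Auxiliary: if `x(yz)` is defined then `xy` is defined and `(xy)z = x(yz)`. -/
theorem aux_leftD {m : P → P → Option P} (hsg : IsSemigroupoid m) {x y z q r : P}
    (h2 : m y z = some q) (h3 : m x q = some r) :
    ∃ p, m x y = some p ∧ m p z = some r := by
  obtain ⟨hs1, hs2, heq⟩ := hsg x y z (Or.inl (by simp [ob, h2, h3]))
  simp only [ob, h2, Option.bind_some, Option.bind_some, h3] at hs2 heq
  cases hxy : m x y with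
  | none => rw [hxy] at hs2; simp at hs2
  | some p =>
    rw [hxy] at heq
    simp only [Option.bind_some] at heq
    exact ⟨p, rfl, heq.symm⟩

/-- Auxiliary: if `(xy)z` is defined then `yz` is defined and `x(yz) = (xy)z`. -/
theorem aux_rightD {m : P → P → Option P} (hsg : IsSemigroupoid m) {x y z p r : P}
    (h1 : m x y = some p) (h3 : m p z = some r) :
    ∃ q, m y z = some q ∧ m x q = some r := by
  obtain ⟨hs1, hs2, heq⟩ := hsg x y z (Or.inr (Or.inl (by simp [ob, h1, h3])))
  simp only [ob, h1, Option.bind_some, Option.bind_some, h3] at hs1 heq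
  cases hyz : m y z with
  | none => rw [hyz] at hs1; simp at hs1
  | some q =>
    rw [hyz] at heq
    simp only [Option.bind_some] at heq
    exact ⟨q, rfl, heq⟩

/-- Auxiliary: an idempotent is its own preinverse. -/
theorem aux_idem_self_preinv {m : P → P → Option P} {e : P} (he : IsIdempotent m e) :
    IsPreinverse m e e := by
  have he' : m e e = some e := he
  refine ⟨by simp [he'], by simp [he'], ?_, ?_, ?_, ?_⟩ <;>
    simp [ob, he']

/-- Auxiliary: preinversehood is symmetric. -/
theorem aux_preinv_symm {m : P → P → Option P} {x x' : P} (h : IsPreinverse m x x') :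
    IsPreinverse m x' x :=
  ⟨h.2.1, h.1, h.2.2.2.2.1, h.2.2.2.2.2, h.2.2.1, h.2.2.2.1⟩

/-- Auxiliary key lemma: in a semigroupoid with preinverses that are unique,
the product of two idempotents, if defined, is idempotent, and the reverse
product is defined. -/
theorem aux_key {m : P → P → Option P} (hsg : IsSemigroupoid m)
    (hpre : ∀ x : P, ∃ x', IsPreinverse m x x') (hu : HasUniquePreinverses m)
    {e f : P} (he : IsIdempotent m e) (hf : IsIdempotent m f)
    (hef : (m e f).isSome) :
    ∃ g, m e f = some g ∧ IsIdempotent m g ∧ (m f e).isSome := by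
  have he' : m e e = some e := he
  have hf' : m f f = some f := hf
  obtain ⟨g, hg⟩ := Option.isSome_iff_exists.mp hef
  obtain ⟨a, ha⟩ := hpre g
  obtain ⟨hga, hag, hgag, hgag', haga, haga'⟩ := ha
  obtain ⟨u, hu1⟩ := Option.isSome_iff_exists.mp hga
  obtain ⟨v, hv1⟩ := Option.isSome_iff_exists.mp hag
  -- unpack the preinverse equations
  rw [hu1] at hgag haga'
  rw [hv1] at hgag' haga
  simp only [ob, Option.bind_some, Option.bind_some] at hgag hgag' haga haga'
  -- hgag : m u g = some g, hgag' : m g v = some g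
  -- haga : m v a = some a, haga' : m a u = some a
  -- fa = w, e(fa) = u
  obtain ⟨w, hw1, hw2⟩ := aux_rightD hsg hg hu1
  -- ae = s, (ae)f = v
  obtain ⟨s, hs1, hs2⟩ := aux_leftD hsg hg hv1
  -- (fa)e = t = f(ae)
  obtain ⟨t, ht1, ht2⟩ := aux_assoc3 hsg hw1 hs1
  -- ft = t  (from ff = f, fs = t)
  obtain ⟨r, hr1, hr2⟩ := aux_assoc3 hsg hf' ht2
  rw [ht2] at hr1
  injection hr1 with hr1; subst hr1
  -- gt = c = et
  obtain ⟨c, hc1, hc2⟩ := aux_assoc3 hsg hg hr2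
  -- te = t (from we = t, ee = e)
  obtain ⟨r, hr3, hr4⟩ := aux_assoc3 hsg ht1 he'
  rw [ht1] at hr4
  injection hr4 with hr4; subst hr4
  -- tf = d2, tg = d (from te = t, ef = g)
  obtain ⟨d, hd1, hd2⟩ := aux_assoc3 hsg hr3 hg
  -- fw = w (ff = f, fa = w)
  obtain ⟨r, hr5, hr6⟩ := aux_assoc3 hsg hf' hw1
  rw [hw1] at hr5
  injection hr5 with hr5; subst hr5
  -- gw = u (ef = g, fw = w, so gw = ew = u)
  obtain ⟨r, hr7, hr8⟩ := aux_assoc3 hsg hg hr6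
  rw [hw2] at hr8
  injection hr8 with hr8; subst hr8
  obtain ⟨d3, hd3, hd4⟩ := aux_assoc3 hsg ht1 hg
  -- d3 = tf, wg = d3; also tf from (t,e,f): te = t, ef = g: tf = tg = d
  rw [hd1] at hd3
  injection hd3 with hd3; subst hd3
  -- so hd4 : m w g = some d, hd2 : m t g = some d
  -- (gw)g = g(wg): gw = u, wg = d: aux_assoc3 on (g, w, g): m g w = u, m w g = d ⇒ u g = g d
  obtain ⟨r, hr9, hr10⟩ := aux_assoc3 hsg hr7 hd4
  rw [hgag] at hr9
  injection hr9 with hr9; subst hr9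
  -- hr10 : m g d = some g
  -- (gt)g = g(tg): gt = c, tg = d ⇒ cg = gd = g
  obtain ⟨r, hr11, hr12⟩ := aux_assoc3 hsg hc1 hd2
  rw [hr10] at hr12
  injection hr12 with hr12; subst hr12
  -- hr11 : m c g = some g
  -- tw = da: (t,f,a): tf = d, fa = w ⇒ da = tw
  obtain ⟨r, hr13, hr14⟩ := aux_assoc3 hsg hd1 hw1
  -- da = wu: (w,g,a): wg = d, ga = u ⇒ da = wu
  obtain ⟨r2, hr15, hr16⟩ := aux_assoc3 hsg hd4 hu1
  -- wu = fa = w: (f,a,u): fa = w, au = a ⇒ wu = fa = w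
  obtain ⟨r3, hr17, hr18⟩ := aux_assoc3 hsg hw1 haga'
  rw [hw1] at hr18
  injection hr18 with hr18; subst hr18
  rw [hr17] at hr16
  injection hr16 with hr16; subst hr16
  rw [hr15] at hr13
  injection hr13 with hr13; subst hr13
  -- hr14 : m t w = some w
  -- tt = t: (t,w,e): tw = w, we = t ⇒ we = tt, so tt = t
  obtain ⟨r4, hr19, hr20⟩ := aux_assoc3 hsg hr14 ht1
  rw [ht1] at hr19
  injection hr19 with hr19; subst hr19
  -- hr20 : m t t = some t
  -- dt = tt = t: (t,f,t): tf = d, ft = t ⇒ dt = tt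
  obtain ⟨r5, hr21, hr22⟩ := aux_assoc3 hsg hd1 hr2
  rw [hr20] at hr22
  injection hr22 with hr22; subst hr22
  -- hr21 : m d t = some t
  -- tc = tt = t: (t,e,t): te = t, et = c ⇒ tt = tc
  obtain ⟨r6, hr23, hr24⟩ := aux_assoc3 hsg hr3 hc2
  rw [hr20] at hr23
  injection hr23 with hr23; subst hr23
  -- hr24 : m t c = some t
  -- t is a preinverse of g
  have hpt : IsPreinverse m g t := by
    refine ⟨by simp [hc1], by simp [hd2], ?_, ?_, ?_, ?_⟩ <;>
      simp [ob, hc1, hd2, hr11, hr10, hr21, hr24]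
  -- so a = t, hence a is idempotent
  have hat : a = t := hu g a t ⟨hga, hag, by rw [hu1]; simpa [ob] using hgag,
    by rw [hv1]; simpa [ob] using hgag', by rw [hv1]; simpa [ob] using haga,
    by rw [hu1]; simpa [ob] using haga'⟩ hpt
  subst hat
  have hta : IsIdempotent m a := hr20
  -- g is a preinverse of a; a is a preinverse of a; so g = a, idempotent
  have hgt : g = a := hu a g a (aux_preinv_symm hpt) (aux_idem_self_preinv hta)
  -- fe defined: fa = w with g = a, i.e. m f g = some w; f(ef): leftD
  have hfg : m f g = some w := by rw [hgt]; exact hw1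
  obtain ⟨p, hp1, _⟩ := aux_leftD hsg hg hfg
  exact ⟨g, hg, by rw [hgt]; exact hta, by simp [hp1]⟩

/-- In a pregroupoid with unique preinverses, if `i`, `j` are
idempotents and `ij` is defined, then `ij` and `ji` are defined idempotents. -/
theorem pregroupoid_idempotent_products {P : Type*}
    (m : P → P → Option P) (h : IsPregroupoid m) (hu : HasUniquePreinverses m)
    (i j : P) (hi : IsIdempotent m i) (hj : IsIdempotent m j)
    (hij : (m i j).isSome) :
    (∃ u, m i j = some u ∧ IsIdempotent m u) ∧
      (∃ v, m j i = some v ∧ IsIdempotent m v) := by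
  obtain ⟨⟨hsg, _⟩, hpre⟩ := h
  obtain ⟨u, hu1, hu2, hji⟩ := aux_key hsg hpre hu hi hj hij
  obtain ⟨v, hv1, hv2, _⟩ := aux_key hsg hpre hu hj hi hji
  exact ⟨⟨u, hu1, hu2⟩, ⟨v, hv1, hv2⟩⟩

end PaperMagmoid
end

section
/- Let P be a pregroupoid. Then P has unique preinverses if and only if for all idempotents i, j ∈ P with (ij)↓, the product ji is also defined and ij = ji. -/
namespace PaperMagmoid

variable {P : Type*}

section Aux

variable {P : Type*} {m : P → P → Option P}

private lemma pin {o : Option P} {c k : P} (h1 : o = some c) (h2 : o = some k) : c = k := by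
  rw [h1] at h2; exact Option.some_injective _ h2

private lemma assocPair (hsg : IsSemigroupoid m) {x y z a b : P}
    (hxy : m x y = some a) (hyz : m y z = some b) :
    ∃ c, m a z = some c ∧ m x b = some c := by
  obtain ⟨h1, h2, h3⟩ := hsg x y z (Or.inr (Or.inr ⟨by simp [hxy], by simp [hyz]⟩))
  rw [hxy] at h2 h3
  rw [hyz] at h1 h3
  obtain ⟨c, hc⟩ := Option.isSome_iff_exists.mp h2
  exact ⟨c, hc, h3.trans hc⟩

private lemma assocL (hsg : IsSemigroupoid m) {x y z a c : P}
    (hxy : m x y = some a) (haz : m a z = some c) :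
    ∃ b, m y z = some b ∧ m x b = some c := by
  obtain ⟨h1, h2, h3⟩ := hsg x y z
    (Or.inr (Or.inl (by rw [hxy]; show (m a z).isSome; simp [haz])))
  rw [hxy] at h3
  have h3' : ob m (some x) (m y z) = some c := by rw [h3]; exact haz
  cases hyz : m y z with
  | none => rw [hyz] at h1; simp [ob] at h1
  | some b => rw [hyz] at h3'; exact ⟨b, rfl, h3'⟩

private lemma assocR (hsg : IsSemigroupoid m) {x y z b c : P}
    (hyz : m y z = some b) (hxb : m x b = some c) :
    ∃ a, m x y = some a ∧ m a z = some c := by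
  obtain ⟨h1, h2, h3⟩ := hsg x y z
    (Or.inl (by rw [hyz]; show (m x b).isSome; simp [hxb]))
  rw [hyz] at h3
  have h3' : ob m (m x y) (some z) = some c := by rw [← h3]; exact hxb
  cases hxy : m x y with
  | none => rw [hxy] at h2; simp [ob] at h2
  | some a => rw [hxy] at h3'; exact ⟨a, rfl, h3'⟩

private lemma preinv_elts {x x' : P} (h : IsPreinverse m x x') :
    ∃ q p, m x x' = some q ∧ m x' x = some p ∧ m q x = some x ∧ m x p = some x ∧
      m p x' = some x' ∧ m x' q = some x' := by
  obtain ⟨h1, h2, h3, h4, h5, h6⟩ := h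
  obtain ⟨q, hq⟩ := Option.isSome_iff_exists.mp h1
  obtain ⟨p, hp⟩ := Option.isSome_iff_exists.mp h2
  rw [hq] at h3 h6
  rw [hp] at h4 h5
  exact ⟨q, p, hq, hp, h3, h4, h5, h6⟩

private lemma preinv_of_elts {x x' q p : P}
    (hq : m x x' = some q) (hp : m x' x = some p) (h1 : m q x = some x)
    (h2 : m x p = some x) (h3 : m p x' = some x') (h4 : m x' q = some x') :
    IsPreinverse m x x' :=
  ⟨by simp [hq], by simp [hp], by rw [hq]; exact h1, by rw [hp]; exact h2,
    by rw [hp]; exact h3, by rw [hq]; exact h4⟩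

/-- Under unique preinverses, a defined product of idempotents is idempotent. -/
private lemma prodIdem (hsg : IsSemigroupoid m) (hpre : ∀ x : P, ∃ x', IsPreinverse m x x')
    (huniq : HasUniquePreinverses m) {i j u : P}
    (hi : m i i = some i) (hj : m j j = some j) (hu : m i j = some u) :
    m u u = some u := by
  obtain ⟨x', hx'⟩ := hpre u
  obtain ⟨b, a, hb, ha, hbu, hua, hax', hx'b⟩ := preinv_elts hx'
  -- e1 = x'i, e2 = jx'
  obtain ⟨e1, he1, he1j⟩ := assocR hsg hu ha
  obtain ⟨e2, he2, hie2⟩ := assocL hsg hu hb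
  -- w = e2 i = j e1
  obtain ⟨w, he2i, hje1⟩ := assocPair hsg he2 he1
  -- e1 e2 = x'
  obtain ⟨c4, hc4a, hc4b⟩ := assocPair hsg he1j he2
  rw [pin hc4a hax'] at hc4b  -- hc4b : m e1 e2 = some x'
  -- w e2 = e2
  obtain ⟨c5, hc5a, hc5b⟩ := assocPair hsg hje1 hc4b
  rw [pin hc5b he2] at hc5a  -- hc5a : m w e2 = some e2
  -- w w = w
  obtain ⟨c6, hc6a, hc6b⟩ := assocPair hsg hc5a he2i
  rw [pin hc6a he2i] at hc6b  -- hc6b : m w w = some w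
  -- j e2 = e2
  obtain ⟨c7, hc7a, hc7b⟩ := assocPair hsg hj he2
  rw [pin hc7a he2] at hc7b  -- m j e2 = some e2
  -- u e2 = b
  obtain ⟨c8, hc8a, hc8b⟩ := assocPair hsg hu hc7b
  rw [pin hc8b hie2] at hc8a  -- m u e2 = some b
  -- u w = g, b i = g
  obtain ⟨g, hbi, huw⟩ := assocPair hsg hc8a he2i
  -- e1 i = e1
  obtain ⟨c10, hc10a, hc10b⟩ := assocPair hsg he1 hi
  rw [pin hc10b he1] at hc10a  -- m e1 i = some e1
  -- e1 u = a
  obtain ⟨c11, hc11a, hc11b⟩ := assocPair hsg hc10a hu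
  rw [pin hc11a he1j] at hc11b  -- m e1 u = some a
  -- w u = k, j a = k
  obtain ⟨k, hwu, hja⟩ := assocPair hsg hje1 hc11b
  -- g j = u
  obtain ⟨c13, hc13a, hc13b⟩ := assocPair hsg hbi hu
  rw [pin hc13b hbu] at hc13a  -- m g j = some u
  -- g i = g
  obtain ⟨c14, hc14a, hc14b⟩ := assocPair hsg hbi hi
  rw [pin hc14b hbi] at hc14a  -- m g i = some g
  -- g u = u
  obtain ⟨c15, hc15a, hc15b⟩ := assocPair hsg hc14a hu
  rw [pin hc15a hc13a] at hc15b  -- m g u = some u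
  -- j k = k
  obtain ⟨c16, hc16a, hc16b⟩ := assocPair hsg hj hja
  rw [pin hc16a hja] at hc16b  -- m j k = some k
  -- u j = u
  obtain ⟨c17, hc17a, hc17b⟩ := assocPair hsg hu hj
  rw [pin hc17b hu] at hc17a  -- m u j = some u
  -- u k = u
  obtain ⟨c18, hc18a, hc18b⟩ := assocPair hsg hc17a hja
  rw [pin hc18a hua] at hc18b  -- m u k = some u
  -- a j = a
  obtain ⟨c19, hc19a, hc19b⟩ := assocPair hsg he1j hj
  rw [pin hc19b he1j] at hc19a  -- m a j = some a
  -- a e2 = x'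
  obtain ⟨c20, hc20a, hc20b⟩ := assocPair hsg hc19a he2
  rw [pin hc20a hax'] at hc20b  -- m a e2 = some x'
  -- a w = e1
  obtain ⟨c21, hc21a, hc21b⟩ := assocPair hsg hc20b he2i
  rw [pin hc21a he1] at hc21b  -- m a w = some e1
  -- k w = w
  obtain ⟨c22, hc22a, hc22b⟩ := assocPair hsg hja hc21b
  rw [pin hc22b hje1] at hc22a  -- m k w = some w
  -- w i = w
  obtain ⟨c23, hc23a, hc23b⟩ := assocPair hsg he2i hi
  rw [pin hc23b he2i] at hc23a  -- m w i = some w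
  -- w b = e2
  obtain ⟨c24, hc24a, hc24b⟩ := assocPair hsg hc23a hie2
  rw [pin hc24a hc5a] at hc24b  -- m w b = some e2
  -- w g = w
  obtain ⟨c25, hc25a, hc25b⟩ := assocPair hsg hc24b hbi
  rw [pin hc25a he2i] at hc25b  -- m w g = some w
  -- now: u preinverse of w, w preinverse of w; uniqueness gives u = w
  have hwu' : IsPreinverse m w u :=
    preinv_of_elts hwu huw hc22a hc25b hc15b hc18b
  have hww' : IsPreinverse m w w :=
    preinv_of_elts hc6b hc6b hc6b hc6b hc6b hc6b
  have : u = w := huniq w u w hwu' hww'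
  rw [this]; exact hc6b

end Aux

/-- A pregroupoid has unique preinverses iff for all idempotents
`i`, `j` with `ij` defined, `ji` is defined and `ij = ji`. -/
theorem pregroupoid_uniquePreinverses_iff_idempotents_commute {P : Type*}
    (m : P → P → Option P) (h : IsPregroupoid m) :
    HasUniquePreinverses m ↔
      ∀ i j : P, IsIdempotent m i → IsIdempotent m j → (m i j).isSome →
        ∃ u, m i j = some u ∧ m j i = some u := by
  obtain ⟨⟨hsg, _⟩, hpre⟩ := h
  constructor
  · intro huniq i j hi hj hij
    obtain ⟨u, hu⟩ := Option.isSome_iff_exists.mp hij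
    have huu : m u u = some u := prodIdem hsg hpre huniq hi hj hu
    -- s1 = j u, with i s1 = u
    obtain ⟨s1, hju, his1⟩ := assocL hsg hu huu
    -- v = j i, with v j = s1
    obtain ⟨v, hv, hvj⟩ := assocR hsg hu hju
    have hvv : m v v = some v := prodIdem hsg hpre huniq hj hi hv
    -- j v = v
    obtain ⟨c1, hc1a, hc1b⟩ := assocPair hsg hj hv
    rw [pin hc1a hv] at hc1b  -- m j v = some v
    -- u v = s2 = i v
    obtain ⟨s2, huv, hiv⟩ := assocPair hsg hu hc1b
    -- i u = u
    obtain ⟨c2, hc2a, hc2b⟩ := assocPair hsg hi hu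
    rw [pin hc2a hu] at hc2b  -- m i u = some u
    -- v u = s1
    obtain ⟨c3, hc3a, hc3b⟩ := assocPair hsg hv hc2b
    rw [pin hc3b hju] at hc3a  -- m v u = some s1
    -- u i = s2a with s2a j = u
    obtain ⟨s2a, hui, hs2aj⟩ := assocR hsg hu huu
    -- pin s2a = s2 via triple (i,j,i)
    obtain ⟨c4, hc4a, hc4b⟩ := assocPair hsg hu hv
    rw [pin hui hc4a, pin hc4b hiv] at hui
    -- hui : m u i = some s2
    -- s2 u = u
    obtain ⟨c5, hc5a, hc5b⟩ := assocPair hsg hui hc2b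
    rw [pin hc5b huu] at hc5a  -- m s2 u = some u
    -- u j = u
    obtain ⟨c6, hc6a, hc6b⟩ := assocPair hsg hu hj
    rw [pin hc6b hu] at hc6a  -- m u j = some u
    -- u s1 = u
    obtain ⟨c7, hc7a, hc7b⟩ := assocPair hsg hc6a hju
    rw [pin hc7a huu] at hc7b  -- m u s1 = some u
    -- s1 v = v
    obtain ⟨c8, hc8a, hc8b⟩ := assocPair hsg hvj hc1b
    rw [pin hc8b hvv] at hc8a  -- m s1 v = some v
    -- v i = v
    obtain ⟨c9, hc9a, hc9b⟩ := assocPair hsg hv hi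
    rw [pin hc9b hv] at hc9a  -- m v i = some v
    -- v s2 = v
    obtain ⟨c10, hc10a, hc10b⟩ := assocPair hsg hc9a hiv
    rw [pin hc10a hvv] at hc10b  -- m v s2 = some v
    have hvpre : IsPreinverse m u v :=
      preinv_of_elts huv hc3a hc5a hc7b hc8a hc10b
    have hupre : IsPreinverse m u u :=
      preinv_of_elts huu huu huu huu huu huu
    have hveq : v = u := huniq u v u hvpre hupre
    exact ⟨u, hu, hveq ▸ hv⟩
  · intro hcomm x x' x'' hx' hx''
    obtain ⟨q, p, hq, hp, hqx, hxp, hpx', hx'q⟩ := preinv_elts hx'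
    obtain ⟨q2, p2, hq2, hp2, hq2x, hxp2, hp2x'', hx''q2⟩ := preinv_elts hx''
    -- p idempotent
    obtain ⟨c1, hc1a, hc1b⟩ := assocPair hsg hp hxp
    rw [pin hc1b hp] at hc1a  -- m p p = some p
    obtain ⟨c2, hc2a, hc2b⟩ := assocPair hsg hp2 hxp2
    rw [pin hc2b hp2] at hc2a  -- m p2 p2 = some p2
    obtain ⟨c3, hc3a, hc3b⟩ := assocPair hsg hqx hq
    rw [pin hc3a hq] at hc3b  -- m q q = some q
    obtain ⟨c4, hc4a, hc4b⟩ := assocPair hsg hq2x hq2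
    rw [pin hc4a hq2] at hc4b  -- m q2 q2 = some q2
    -- p p2 = p
    obtain ⟨c5, hc5a, hc5b⟩ := assocPair hsg hp hxp2
    rw [pin hc5b hp] at hc5a  -- m p p2 = some p
    -- p2 p = p2
    obtain ⟨c6, hc6a, hc6b⟩ := assocPair hsg hp2 hxp
    rw [pin hc6b hp2] at hc6a  -- m p2 p = some p2
    -- idempotents commute: p = p2
    obtain ⟨s, hs1, hs2⟩ := hcomm p p2 hc1a hc2a (by rw [hc5a]; rfl)
    have hpp2 : p = p2 := (pin hc5a hs1).trans (pin hs2 hc6a)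
    -- q q2 = q2
    obtain ⟨c7, hc7a, hc7b⟩ := assocPair hsg hqx hq2
    rw [pin hc7a hq2] at hc7b  -- m q q2 = some q2
    -- q2 q = q
    obtain ⟨c8, hc8a, hc8b⟩ := assocPair hsg hq2x hq
    rw [pin hc8a hq] at hc8b  -- m q2 q = some q
    obtain ⟨t, ht1, ht2⟩ := hcomm q q2 hc3b hc4b (by rw [hc7b]; rfl)
    have hqq2 : q = q2 := (pin ht2 hc8b).symm.trans (pin ht1 hc7b)
    -- p x'' = x': from x'(x x'') = (x' x) x''
    obtain ⟨c9, hc9a, hc9b⟩ := assocPair hsg hp hq2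
    -- hc9a : m p x'' = some c9, hc9b : m x' q2 = some c9
    rw [← hqq2] at hc9b
    rw [pin hc9b hx'q] at hc9a  -- m p x'' = some x'
    rw [hpp2] at hc9a  -- m p2 x'' = some x'
    exact pin hc9a hp2x''


end PaperMagmoid
end

section
/- Let P be a pregroupoid with unique preinverses and let x, y ∈ P with (xy)↓. Then (y⁻¹x⁻¹)↓ and (xy)⁻¹ = y⁻¹x⁻¹. -/
namespace PaperMagmoid

variable {P : Type*}

section Helpers

variable {m : P → P → Option P}

/-- From `xy = a` and `yz = b` defined, get `xb = az` defined. -/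
lemma assoc1 (hS : IsSemigroupoid m) {x y z a b : P}
    (h1 : m x y = some a) (h2 : m y z = some b) :
    ∃ r, m x b = some r ∧ m a z = some r := by
  obtain ⟨h3, -, h5⟩ := hS x y z (Or.inr (Or.inr ⟨by simp [h1], by simp [h2]⟩))
  simp only [ob, h1, h2, Option.bind_some] at h3 h5
  obtain ⟨r, hr⟩ := Option.isSome_iff_exists.mp h3
  exact ⟨r, hr, by rw [← h5, hr]⟩

/-- From `xy = a` and `az = r` defined, get `yz` defined with `x(yz) = r`. -/
lemma assoc2 (hS : IsSemigroupoid m) {x y z a r : P}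
    (h1 : m x y = some a) (h2 : m a z = some r) :
    ∃ b, m y z = some b ∧ m x b = some r := by
  obtain ⟨h3, -, h5⟩ := hS x y z (Or.inr (Or.inl (by simp [ob, h1, h2])))
  cases hb : m y z with
  | none => simp [ob, hb] at h3
  | some b =>
    simp only [ob, h1, hb, Option.bind_some] at h5
    exact ⟨b, rfl, by rw [h5, h2]⟩

/-- From `yz = b` and `xb = r` defined, get `xy` defined with `(xy)z = r`. -/
lemma assoc3 (hS : IsSemigroupoid m) {x y z b r : P}
    (h1 : m y z = some b) (h2 : m x b = some r) :
    ∃ a, m x y = some a ∧ m a z = some r := by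
  obtain ⟨-, h4, h5⟩ := hS x y z (Or.inl (by simp [ob, h1, h2]))
  cases ha : m x y with
  | none => simp [ob, ha] at h4
  | some a =>
    simp only [ob, h1, ha, Option.bind_some] at h5
    exact ⟨a, rfl, by rw [← h5, h2]⟩

lemma fix {o : Option P} {a b : P} (h1 : o = some a) (h2 : o = some b) : a = b := by
  rw [h1] at h2; exact Option.some.inj h2

/-- Unfold a preinverse into concrete product equations. -/
lemma preinv_data {x xi : P} (hx : IsPreinverse m x xi) :
    ∃ e f, m x xi = some e ∧ m xi x = some f ∧ m e x = some x ∧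
      m x f = some x ∧ m f xi = some xi ∧ m xi e = some xi := by
  obtain ⟨h1, h2, h3, h4, h5, h6⟩ := hx
  obtain ⟨e, he⟩ := Option.isSome_iff_exists.mp h1
  obtain ⟨f, hf⟩ := Option.isSome_iff_exists.mp h2
  refine ⟨e, f, he, hf, ?_, ?_, ?_, ?_⟩
  · simpa [ob, he] using h3
  · simpa [ob, hf] using h4
  · simpa [ob, hf] using h5
  · simpa [ob, he] using h6

/-- Build a preinverse from concrete product equations. -/
lemma mk_preinv {x xi e f : P} (he : m x xi = some e) (hf : m xi x = some f)
    (h3 : m e x = some x) (h4 : m x f = some x) (h5 : m f xi = some xi)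
    (h6 : m xi e = some xi) : IsPreinverse m x xi := by
  refine ⟨by simp [he], by simp [hf], ?_, ?_, ?_, ?_⟩ <;>
    simp [ob, he, hf, h3, h4, h5, h6]

lemma idem_self_preinv {i : P} (hi : m i i = some i) : IsPreinverse m i i :=
  mk_preinv hi hi hi hi hi hi

lemma preinv_symm {x x' : P} (h : IsPreinverse m x x') : IsPreinverse m x' x :=
  ⟨h.2.1, h.1, h.2.2.2.2.1, h.2.2.2.2.2, h.2.2.1, h.2.2.2.1⟩

/-- A defined product of idempotents is idempotent (uses unique preinverses). -/
lemma lemA (hS : IsSemigroupoid m) (hinv : ∀ x : P, ∃ x', IsPreinverse m x x')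
    (hu : HasUniquePreinverses m) {e f p : P}
    (he : m e e = some e) (hf : m f f = some f) (hp : m e f = some p) :
    m p p = some p := by
  obtain ⟨v, hv⟩ := hinv p
  obtain ⟨s1, s2, hpv, hvp, hs1p, hps2, hs2v, hvs1⟩ := preinv_data hv
  obtain ⟨t2, hfv, het2⟩ := assoc2 hS hp hpv
  obtain ⟨t1, hve, ht1f⟩ := assoc3 hS hp hvp
  obtain ⟨q, hft1, ht2e⟩ := assoc1 hS hfv hve
  -- s2 t1 = t1
  obtain ⟨r, hs2t1, hr⟩ := assoc1 hS hs2v hve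
  rw [fix hr hve] at hs2t1
  -- t1 q = t1
  obtain ⟨r, ht1q, hr⟩ := assoc1 hS ht1f hft1
  rw [fix hr hs2t1] at ht1q
  -- q q = q
  obtain ⟨r, hr, hqq⟩ := assoc1 hS hft1 ht1q
  rw [fix hr hft1] at hqq
  -- e p = p
  obtain ⟨r, hep, hr⟩ := assoc1 hS he hp
  rw [fix hr hp] at hep
  -- p f = p
  obtain ⟨r, hr, hpf⟩ := assoc1 hS hp hf
  rw [fix hr hp] at hpf
  -- p t2 = s1
  obtain ⟨r, hpt2, hr⟩ := assoc1 hS hpf hfv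
  rw [fix hr hpv] at hpt2
  -- p q = s1 e =: r1
  obtain ⟨r1, hpq, hs1e⟩ := assoc1 hS hpt2 ht2e
  -- t2 p = q p =: r2
  obtain ⟨r2, ht2p, hqp⟩ := assoc1 hS ht2e hep
  -- r1 p = p
  obtain ⟨r, hr, hr1p⟩ := assoc1 hS hs1e hep
  rw [fix hr hs1p] at hr1p
  -- p r2 = p
  obtain ⟨r, hpr2, hr⟩ := assoc1 hS hpq hqp
  rw [fix hr hr1p] at hpr2
  -- t2 s1 = t2
  obtain ⟨r, hr, ht2s1⟩ := assoc1 hS hfv hvs1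
  rw [fix hr hfv] at ht2s1
  -- t2 r1 = q
  obtain ⟨r, ht2r1, hr⟩ := assoc1 hS ht2s1 hs1e
  rw [fix hr ht2e] at ht2r1
  -- r2 q = q
  obtain ⟨r, hr, hr2q⟩ := assoc1 hS ht2p hpq
  rw [fix hr ht2r1] at hr2q
  -- q r1 = q
  obtain ⟨r, hqr1, hr⟩ := assoc1 hS hqp hpq
  rw [fix hr hr2q] at hqr1
  have hq : IsPreinverse m p q := mk_preinv hpq hqp hr1p hpr2 hr2q hqr1
  rw [← hu p q v hq hv] at hv
  have h1 : IsPreinverse m q p := preinv_symm hv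
  have h2 : IsPreinverse m q q := idem_self_preinv hqq
  have h3 : p = q := hu q p q h1 h2
  rw [h3]; exact hqq

/-- Defined products of idempotents commute (uses unique preinverses). -/
lemma lemB (hS : IsSemigroupoid m) (hinv : ∀ x : P, ∃ x', IsPreinverse m x x')
    (hu : HasUniquePreinverses m) {e f p : P}
    (he : m e e = some e) (hf : m f f = some f) (hp : m e f = some p) :
    m f e = some p := by
  have hpp := lemA hS hinv hu he hf hp
  obtain ⟨z1, hfp, hez1⟩ := assoc2 hS hp hpp
  obtain ⟨k2, hfe, hk2f⟩ := assoc3 hS hp hfp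
  have hk2k2 := lemA hS hinv hu hf he hfe
  -- f k2 = k2
  obtain ⟨r, hfk2, hr⟩ := assoc1 hS hf hfe
  rw [fix hr hfe] at hfk2
  -- e k2 = p k2 =: a1
  obtain ⟨a1, hek2, hpk2⟩ := assoc1 hS hp hfk2
  -- p e = a1
  obtain ⟨r, hr, hpe⟩ := assoc3 hS hfe hek2
  rw [fix hr hp] at hpe
  -- e p = p
  obtain ⟨r, hep, hr⟩ := assoc1 hS he hp
  rw [fix hr hp] at hep
  -- k2 p = z1
  obtain ⟨r, hr, hk2p⟩ := assoc1 hS hfe hep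
  rw [fix hr hfp] at hk2p
  -- a1 p = p
  obtain ⟨r, hr, ha1p⟩ := assoc1 hS hpe hep
  rw [fix hr hpp] at ha1p
  -- p z1 = p
  obtain ⟨r, hpz1, hr⟩ := assoc1 hS hpk2 hk2p
  rw [fix hr ha1p] at hpz1
  -- k2 e = k2
  obtain ⟨r, hr, hk2e⟩ := assoc1 hS hfe he
  rw [fix hr hfe] at hk2e
  -- k2 a1 = k2
  obtain ⟨r, hk2a1, hr⟩ := assoc1 hS hk2e hek2
  rw [fix hr hk2k2] at hk2a1
  -- z1 k2 = k2
  obtain ⟨r, hr, hz1k2⟩ := assoc1 hS hk2p hpk2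
  rw [fix hr hk2a1] at hz1k2
  have hq : IsPreinverse m p k2 := mk_preinv hpk2 hk2p ha1p hpz1 hz1k2 hk2a1
  have hself : IsPreinverse m p p := idem_self_preinv hpp
  have h3 : k2 = p := hu p k2 p hq hself
  rw [h3] at hfe; exact hfe

end Helpers

/-- In a pregroupoid with unique preinverses, if `xy` is defined
then `y⁻¹x⁻¹` is defined and `(xy)⁻¹ = y⁻¹x⁻¹`. -/
theorem pregroupoid_preinverse_of_product {P : Type*}
    (m : P → P → Option P) (h : IsPregroupoid m) (hu : HasUniquePreinverses m)
    (x y w xi yi : P) (hw : m x y = some w)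
    (hxi : IsPreinverse m x xi) (hyi : IsPreinverse m y yi) :
    ∃ u, m yi xi = some u ∧ IsPreinverse m w u ∧
      ∀ v, IsPreinverse m w v → v = u := by
  obtain ⟨⟨hS, -⟩, hinv⟩ := h
  obtain ⟨e, f, hxxi, hxix, hex, hxf, hfxi, hxie⟩ := preinv_data hxi
  obtain ⟨g, h', hyyi, hyiy, hgy, hyh, hhyi, hyig⟩ := preinv_data hyi
  -- f f = f
  obtain ⟨r, hr, hff⟩ := assoc1 hS hxix hxf
  rw [fix hr hxix] at hff
  -- g g = g
  obtain ⟨r, hr, hgg⟩ := assoc1 hS hyyi hyig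
  rw [fix hr hyyi] at hgg
  -- xi w = f y =: t
  obtain ⟨t, hxiw, hfy⟩ := assoc1 hS hxix hw
  -- x g = w yi =: s
  obtain ⟨s, hxg, hwyi⟩ := assoc1 hS hw hyyi
  -- f g = t yi =: k
  obtain ⟨k, hfg, htyi⟩ := assoc1 hS hfy hyyi
  -- g f = k (idempotents commute)
  have hgf : m g f = some k := lemB hS hinv hu hff hgg hfg
  -- yi k = yi f =: c
  obtain ⟨c, hyik, hyif⟩ := assoc1 hS hyig hgf
  -- yi xi = c xi =: u  (definedness of yi xi!)
  obtain ⟨u, hyixi, hcxi⟩ := assoc1 hS hyif hfxi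
  -- w u = s xi =: W1
  obtain ⟨W1, hwu, hsxi⟩ := assoc1 hS hwyi hyixi
  -- yi t = u w =: W2
  obtain ⟨W2, hyit, huw⟩ := assoc1 hS hyixi hxiw
  -- w W2 = s t =: R1
  obtain ⟨R1, hwW2, hst⟩ := assoc1 hS hwyi hyit
  obtain ⟨R1', hwW2', hW1w⟩ := assoc1 hS hwu huw
  rw [fix hwW2' hwW2] at hW1w
  -- g t = k y =: d
  obtain ⟨d, hgt, hky⟩ := assoc1 hS hgf hfy
  -- k y = t
  obtain ⟨r, hr, hky2⟩ := assoc1 hS hfg hgy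
  rw [fix hr hfy] at hky2
  rw [fix hky hky2] at hgt
  -- s t = x t
  obtain ⟨r, hxt, hst2⟩ := assoc1 hS hxg hgt
  rw [fix hst2 hst] at hxt
  -- x t = w, hence R1 = w
  obtain ⟨r, hxt2, hr⟩ := assoc1 hS hxf hfy
  rw [fix hr hw] at hxt2
  rw [fix hxt hxt2] at hW1w hwW2
  -- t u = k xi =: c2
  obtain ⟨c2, htu, hkxi⟩ := assoc1 hS htyi hyixi
  -- g xi = c2
  obtain ⟨r, hgxi, hr⟩ := assoc1 hS hgf hfxi
  rw [fix hr hkxi] at hgxi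
  -- yi c2 = W2 u =: R2
  obtain ⟨R2, hyic2, hW2u⟩ := assoc1 hS hyit htu
  -- yi c2 = u, hence R2 = u
  obtain ⟨r, hyic2', hr⟩ := assoc1 hS hyig hgxi
  rw [fix hr hyixi] at hyic2'
  rw [fix hyic2 hyic2'] at hW2u
  -- u W1 = u
  obtain ⟨r, huW1, hr⟩ := assoc1 hS huw hwu
  rw [fix hr hW2u] at huW1
  have hpre : IsPreinverse m w u := mk_preinv hwu huw hW1w hwW2 hW2u huW1
  exact ⟨u, hyixi, hpre, fun v hv => hu w v u hv hpre⟩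

end PaperMagmoid
end

section
/- Let P be a prepoloid with unique local units and let x ∈ P. Then (λ_xλ_x)↓ with λ_xλ_x = λ_x, and λ_x = λ_{λ_x} = ρ_{λ_x} (λ_x is its own unique local left unit and its own unique local right unit); dually, (ρ_xρ_x)↓ with ρ_xρ_x = ρ_x, and ρ_x = ρ_{ρ_x} = λ_{ρ_x}. -/
namespace PaperMagmoid

variable {P : Type*}

/-- In a prepoloid with unique local units, `λ_x λ_x = λ_x` with
`λ_x = λ_{λ_x} = ρ_{λ_x}`, and dually `ρ_x ρ_x = ρ_x` with
`ρ_x = ρ_{ρ_x} = λ_{ρ_x}`. -/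
theorem prepoloid_local_units_idempotent {P : Type*}
    (m : P → P → Option P) (h : IsPrepoloid m)
    (hul : ∀ x l l' : P, IsLocalLeftUnit m l x → IsLocalLeftUnit m l' x → l = l')
    (hur : ∀ x r r' : P, IsLocalRightUnit m r x → IsLocalRightUnit m r' x → r = r')
    (x lx rx : P) (hlx : IsLocalLeftUnit m lx x) (hrx : IsLocalRightUnit m rx x) :
    (m lx lx = some lx ∧ IsLocalLeftUnit m lx lx ∧ IsLocalRightUnit m lx lx) ∧
    (m rx rx = some rx ∧ IsLocalRightUnit m rx rx ∧ IsLocalLeftUnit m rx rx) := by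
  obtain ⟨hsg, hunits⟩ := h
  have hlx' : m lx x = some x := hlx
  have hrx' : m x rx = some x := hrx
  -- left part
  obtain ⟨⟨l', hl'⟩, _⟩ := hunits lx
  have hl'' : m l' lx = some lx := hl'
  have key := hsg l' lx x (Or.inr (Or.inr ⟨by simp [hl''], by simp [hlx']⟩))
  have heq : m l' x = some x := by
    have := key.2.2
    rw [hlx', hl''] at this
    simpa [ob, hlx'] using this
  have hl'eq : l' = lx := hul x l' lx heq hlx
  have hll : m lx lx = some lx := by rw [hl'eq] at hl''; exact hl''
  -- right part
  obtain ⟨_, ⟨r', hr'⟩⟩ := hunits rx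
  have hr'' : m rx r' = some rx := hr'
  have key2 := hsg x rx r' (Or.inr (Or.inr ⟨by simp [hrx'], by simp [hr'']⟩))
  have heq2 : m x r' = some x := by
    have := key2.2.2
    rw [hr'', hrx'] at this
    simpa [ob, hrx'] using this.symm
  have hr'eq : r' = rx := hur x r' rx heq2 hrx
  have hrr : m rx rx = some rx := by rw [hr'eq] at hr''; exact hr''
  exact ⟨⟨hll, hll, hll⟩, ⟨hrr, hrr, hrr⟩⟩

end PaperMagmoid
end

section
/- Let P be a prepoloid with unique local units and let x, y ∈ P with (xy)↓. Then λ_{xy} = λ_x and ρ_{xy} = ρ_y. -/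
namespace PaperMagmoid

variable {P : Type*}

/-- In a prepoloid with unique local units, if `xy` is defined
then `λ_{xy} = λ_x` and `ρ_{xy} = ρ_y`. -/
theorem prepoloid_local_units_of_product {P : Type*}
    (m : P → P → Option P) (h : IsPrepoloid m)
    (hul : ∀ x l l' : P, IsLocalLeftUnit m l x → IsLocalLeftUnit m l' x → l = l')
    (hur : ∀ x r r' : P, IsLocalRightUnit m r x → IsLocalRightUnit m r' x → r = r')
    (x y w lx ry : P) (hw : m x y = some w)
    (hlx : IsLocalLeftUnit m lx x) (hry : IsLocalRightUnit m ry y) :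
    IsLocalLeftUnit m lx w ∧ IsLocalRightUnit m ry w := by
  have hlx' : m lx x = some x := hlx
  have hry' : m y ry = some y := hry
  constructor
  · have := (h.1 lx x y (Or.inr (Or.inr ⟨by rw [hlx']; rfl, by rw [hw]; rfl⟩))).2.2
    simp only [ob, hlx', hw, Option.bind_some] at this ⊢
    unfold IsLocalLeftUnit
    exact this
  · have := (h.1 x y ry (Or.inr (Or.inr ⟨by rw [hw]; rfl, by rw [hry']; rfl⟩))).2.2
    simp only [ob, hry', hw, Option.bind_some] at this ⊢
    unfold IsLocalRightUnit
    exact this.symm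

end PaperMagmoid
end

section
/- Let P be a poloid. Then every x ∈ P has exactly one left effective unit and exactly one right effective unit. -/
namespace PaperMagmoid

variable {P : Type*}

/-- In a poloid, every element has exactly one left effective
unit and exactly one right effective unit. -/
theorem poloid_effective_units_unique {P : Type*}
    (m : P → P → Option P) (h : IsPoloid m) (x : P) :
    (∃! l, IsLeftEffectiveUnit m l x) ∧ (∃! r, IsRightEffectiveUnit m r x) := by
  obtain ⟨hsg, hu⟩ := h
  obtain ⟨⟨l, hl⟩, ⟨r, hr⟩⟩ := hu x
  constructor
  · refine ⟨l, hl, ?_⟩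
    intro l' hl'
    -- l'(lx) is defined
    have h1 : (ob m (some l') (m l x)).isSome := by
      simp [ob, hl.2, hl'.2]
    obtain ⟨_, h2, h3⟩ := hsg l' l x (Or.inl h1)
    -- so (l'l)x is defined; get u with m l' l = some u
    obtain ⟨u, hu'⟩ : ∃ u, m l' l = some u := by
      rcases hmll : m l' l with _ | u
      · simp [ob, hmll] at h2
      · exact ⟨u, rfl⟩
    have e1 : u = l := hl'.1.1 l u hu'
    have e2 : u = l' := hl.1.2 l' u hu'
    rw [← e1, ← e2]
  · refine ⟨r, hr, ?_⟩
    intro r' hr'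
    have h1 : (ob m (m x r) (some r')).isSome := by
      simp [ob, hr.2, hr'.2]
    obtain ⟨h2, _, h3⟩ := hsg x r r' (Or.inr (Or.inl h1))
    obtain ⟨u, hu'⟩ : ∃ u, m r r' = some u := by
      rcases hmll : m r r' with _ | u
      · simp [ob, hmll] at h2
      · exact ⟨u, rfl⟩
    have e1 : u = r' := hr.1.1 r' u hu'
    have e2 : u = r := hr'.1.2 r u hu'
    rw [← e1, ← e2]

end PaperMagmoid
end

section
/- Let P be a poloid and let x, y ∈ P. Then (xy)↓ if and only if r_x = ℓ_y, where r_x is the right effective unit of x and ℓ_y is the left effective unit of y. -/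
namespace PaperMagmoid

variable {P : Type*}

/-- In a poloid, `xy` is defined iff `r_x = ℓ_y`. -/
theorem poloid_defined_iff_units_match {P : Type*}
    (m : P → P → Option P) (h : IsPoloid m) (x y rx ly : P)
    (hrx : IsRightEffectiveUnit m rx x) (hly : IsLeftEffectiveUnit m ly y) :
    (m x y).isSome ↔ rx = ly := by
  obtain ⟨hsg, _⟩ := h
  obtain ⟨⟨hrxl, hrxr⟩, hxrx⟩ := hrx
  obtain ⟨⟨hlyl, hlyr⟩, hlyy⟩ := hly
  constructor
  · intro hxy
    -- from x·y defined and x·rx = x, get rx·y defined and equal to y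
    have h2 : (ob m (m x rx) (some y)).isSome := by
      simp [ob, hxrx]; exact hxy
    have h3 := hsg x rx y (Or.inr (Or.inl h2))
    obtain ⟨h4, _, _⟩ := h3
    obtain ⟨w, hw⟩ := Option.isSome_iff_exists.mp h4
    simp only [ob, hxrx] at h4 hw ⊢
    -- m rx y is some
    have hry : (m rx y).isSome := by
      cases hmy : m rx y with
      | none => simp [ob, hmy] at h4
      | some v => simp
    obtain ⟨v, hv⟩ := Option.isSome_iff_exists.mp hry
    have hvy : v = y := hrxl _ _ hv
    rw [hvy] at hv
    -- now consider (rx, ly, y): rx·(ly·y) = rx·y defined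
    have h5 : (ob m (some rx) (m ly y)).isSome := by
      simp [ob, hlyy, hv]
    have h6 := hsg rx ly y (Or.inl h5)
    obtain ⟨_, h7, _⟩ := h6
    have hrl : (m rx ly).isSome := by
      cases hml : m rx ly with
      | none => simp [ob, hml] at h7
      | some u => simp
    obtain ⟨u, hu⟩ := Option.isSome_iff_exists.mp hrl
    have h8 : u = ly := hrxl _ _ hu
    have h9 : u = rx := hlyr _ _ hu
    rw [← h8, h9]
  · intro heq
    subst heq
    have := (hsg x rx y (Or.inr (Or.inr ⟨by simp [hxrx], by simp [hlyy]⟩))).1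
    simp only [ob, hlyy, Option.bind_some] at this
    exact this


end PaperMagmoid
end

section
/- Let P be a poloid and let x ∈ P. If x' is a strong pseudoinverse of x, then x' is a strong preinverse of x. -/
namespace PaperMagmoid

variable {P : Type*}

/-- In a poloid, every strong pseudoinverse of `x` is a strong
preinverse of `x`. -/
theorem poloid_strongPseudoinverse_isStrongPreinverse {P : Type*}
    (m : P → P → Option P) (h : IsPoloid m) (x x' : P)
    (hx' : IsStrongPseudoinverse m x x') : IsStrongPreinverse m x x' := by
  obtain ⟨⟨h1, h2⟩, hu, hv⟩ := hx'
  have hdxx' : (m x x').isSome := by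
    cases hmx : m x x' <;> simp [ob, hmx] at h1 ⊢
  have hdx'x : (m x' x).isSome := by
    cases hmx : m x' x <;> simp [ob, hmx] at h2 ⊢
  obtain ⟨u, hu'⟩ := Option.isSome_iff_exists.mp hdxx'
  have hut := (hu u hu').1
  obtain ⟨hs1, hs2, heq⟩ := h.1 x' x x' (Or.inr (Or.inr ⟨hdx'x, hdxx'⟩))
  have hx'u : ob m (some x') (m x x') = some x' := by
    rw [hu'] at hs1 ⊢
    simp only [ob, Option.bind_some] at hs1 ⊢
    obtain ⟨w, hw⟩ := Option.isSome_iff_exists.mp hs1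
    rw [hw, hut.2 x' w hw]
  refine ⟨⟨hdxx', hdx'x, h1, h2, ?_, hx'u⟩,
    fun u' e => (hu u' e).1, fun v' e => (hv v' e).1⟩
  rw [← heq, hx'u]

end PaperMagmoid
end

section
/- Let P be a poloid and let x ∈ P. Then x has at most one strong pseudoinverse: if x' and x'' are strong pseudoinverses of x, then x' = x''. -/
namespace PaperMagmoid

variable {P : Type*}

/-- In a poloid, an element has at most one strong
pseudoinverse. -/
theorem poloid_strongPseudoinverse_unique {P : Type*}
    (m : P → P → Option P) (h : IsPoloid m) (x x' x'' : P)
    (hx' : IsStrongPseudoinverse m x x') (hx'' : IsStrongPseudoinverse m x x'') :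
    x' = x'' := by
  obtain ⟨hsg, -⟩ := h
  obtain ⟨⟨hps'1, hps'2⟩, hL', hR'⟩ := hx'
  obtain ⟨⟨hps''1, hps''2⟩, hL'', hR''⟩ := hx''
  cases hv : m x' x with
  | none => rw [hv] at hps'2; simp [ob] at hps'2
  | some v =>
  cases hu : m x x'' with
  | none => rw [hu] at hps''1; simp [ob] at hps''1
  | some u =>
  have hvunit : IsTwoSidedUnit m v := (hR' v hv).1
  have huunit : IsTwoSidedUnit m u := (hL'' u hu).1
  obtain ⟨h1, h2, h3⟩ :=
    hsg x' x x'' (Or.inr (Or.inr ⟨by simp [hv], by simp [hu]⟩))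
  rw [hu] at h1; rw [hv, hu] at h3
  simp only [ob, Option.bind_some, Option.bind_some] at h1 h3
  cases hc : m x' u with
  | none => rw [hc] at h1; simp at h1
  | some c =>
    have hc' : m v x'' = some c := by rw [← h3, hc]
    have e1 : c = x' := huunit.2 x' c hc
    have e2 : c = x'' := hvunit.1 x'' c hc'
    rw [← e1, e2]

end PaperMagmoid
end

section
/- Let P be a prepoloid with unique local units, writing λ_x and ρ_x for the unique local left and right units of x. Define a new partial binary operation · on P by: (x·y)↓ if and only if ρ_x = λ_y, in which case x·y = xy (the product xy being defined whenever ρ_x = λ_y). Then P with the operation · is a poloid, in which for each x the element λ_x is a left effective unit for x and ρ_x is a right effective unit for x. -/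
namespace PaperMagmoid

variable {P : Type*}

/-- Auxiliary: associativity extracted from the semigroupoid axiom. -/
lemma sg_assoc {P : Type*} {m : P → P → Option P} (hsg : IsSemigroupoid m)
    {x y z w v : P} (hxy : m x y = some w) (hyz : m y z = some v) :
    ∃ t, m x v = some t ∧ m w z = some t := by
  obtain ⟨h1, h2, h3⟩ := hsg x y z
    (Or.inr (Or.inr ⟨by simp [hxy], by simp [hyz]⟩))
  simp only [ob, hxy, hyz, Option.bind_some, Option.bind_some] at h1 h2 h3
  obtain ⟨t, ht⟩ := Option.isSome_iff_exists.mp h1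
  exact ⟨t, ht, by rw [← h3, ht]⟩

/-- Auxiliary: `x(yz) = x` in unbundled form. -/
lemma sg_unit_abs {P : Type*} {m : P → P → Option P} (hsg : IsSemigroupoid m)
    {l x : P} (hlx : m l x = some x) :
    ∃ u, m l l = some u ∧ m u x = some x := by
  obtain ⟨h1, h2, h3⟩ := hsg l l x (Or.inl (by simp [ob, hlx]))
  simp only [ob, hlx, Option.bind_some] at h2 h3
  rcases hmll : m l l with _ | u
  · rw [hmll] at h2; simp at h2
  · refine ⟨u, rfl, ?_⟩
    rw [hmll] at h3
    simpa using h3.symm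

/-- Auxiliary: `(xr)r = x` in unbundled form. -/
lemma sg_unit_abs_r {P : Type*} {m : P → P → Option P} (hsg : IsSemigroupoid m)
    {r x : P} (hxr : m x r = some x) :
    ∃ u, m r r = some u ∧ m x u = some x := by
  obtain ⟨h1, h2, h3⟩ := hsg x r r (Or.inr (Or.inl (by simp [ob, hxr])))
  simp only [ob, hxr, Option.bind_some] at h1 h3
  rcases hmrr : m r r with _ | u
  · rw [hmrr] at h1; simp at h1
  · refine ⟨u, rfl, ?_⟩
    rw [hmrr] at h3
    simpa using h3

/-- A prepoloid with unique local units `λ_x`, `ρ_x`, with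
multiplication restricted to the products `x·y` with `ρ_x = λ_y`, is a poloid
in which `λ_x` is a left effective unit and `ρ_x` a right effective unit
for each `x`. -/
theorem prepoloid_restricted_is_poloid {P : Type*}
    (m : P → P → Option P) (h : IsPrepoloid m)
    (lf rf : P → P)
    (hl : ∀ x : P, IsLocalLeftUnit m (lf x) x ∧
      ∀ l, IsLocalLeftUnit m l x → l = lf x)
    (hr : ∀ x : P, IsLocalRightUnit m (rf x) x ∧
      ∀ r, IsLocalRightUnit m r x → r = rf x)
    (m' : P → P → Option P)
    (hm' : ∀ x y : P, (rf x = lf y → m' x y = m x y) ∧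
      (rf x ≠ lf y → m' x y = none)) :
    IsPoloid m' ∧
      ∀ x : P, IsLeftEffectiveUnit m' (lf x) x ∧ IsRightEffectiveUnit m' (rf x) x := by
  obtain ⟨hsg, -⟩ := h
  -- units are idempotent
  have hlidem : ∀ x, m (lf x) (lf x) = some (lf x) := by
    intro x
    obtain ⟨u, hu, hux⟩ := sg_unit_abs hsg (hl x).1
    rw [hu, (hl x).2 u hux]
  have hridem : ∀ x, m (rf x) (rf x) = some (rf x) := by
    intro x
    obtain ⟨u, hu, hux⟩ := sg_unit_abs_r hsg (hr x).1
    rw [hu, (hr x).2 u hux]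
  -- lf/rf of units
  have hrl : ∀ x, rf (lf x) = lf x := fun x => ((hr (lf x)).2 _ (hlidem x)).symm
  have hll : ∀ x, lf (lf x) = lf x := fun x => ((hl (lf x)).2 _ (hlidem x)).symm
  have hrr : ∀ x, rf (rf x) = rf x := fun x => ((hr (rf x)).2 _ (hridem x)).symm
  have hlr : ∀ x, lf (rf x) = rf x := fun x => ((hl (rf x)).2 _ (hridem x)).symm
  -- products defined when rf x = lf y
  have hdef : ∀ x y, rf x = lf y → ∃ w, m x y = some w := by
    intro x y hxy
    have h1 : m x (rf x) = some x := (hr x).1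
    have h2 : m (rf x) y = some y := by rw [hxy]; exact (hl y).1
    obtain ⟨t, ht1, ht2⟩ := sg_assoc hsg h1 h2
    exact ⟨t, ht2⟩
  -- lf/rf of products
  have hlprod : ∀ x y w, m x y = some w → lf w = lf x := by
    intro x y w hw
    obtain ⟨t, ht1, ht2⟩ := sg_assoc hsg (hl x).1 hw
    obtain rfl : w = t := by rw [hw] at ht2; exact Option.some.inj ht2
    exact ((hl w).2 _ ht1).symm
  have hrprod : ∀ x y w, m x y = some w → rf w = rf y := by
    intro x y w hw
    obtain ⟨t, ht1, ht2⟩ := sg_assoc hsg hw (hr y).1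
    obtain rfl : w = t := by rw [hw] at ht1; exact Option.some.inj ht1
    exact ((hr w).2 _ ht2).symm
  -- m' characterization
  have hm'some : ∀ x y w, m' x y = some w → rf x = lf y ∧ m x y = some w := by
    intro x y w hw
    by_cases hc : rf x = lf y
    · exact ⟨hc, by rw [← (hm' x y).1 hc]; exact hw⟩
    · rw [(hm' x y).2 hc] at hw; exact absurd hw (by simp)
  have hm'def : ∀ x y, rf x = lf y → ∃ w, m' x y = some w ∧ m x y = some w := by
    intro x y hc
    obtain ⟨w, hw⟩ := hdef x y hc
    exact ⟨w, by rw [(hm' x y).1 hc]; exact hw, hw⟩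
  -- the effective units
  have heff : ∀ x : P,
      IsLeftEffectiveUnit m' (lf x) x ∧ IsRightEffectiveUnit m' (rf x) x := by
    intro x
    constructor
    · refine ⟨⟨?_, ?_⟩, ?_⟩
      · intro u y hy
        obtain ⟨hc, hm⟩ := hm'some (lf x) u y hy
        rw [hrl x] at hc
        rw [hc, (hl u).1] at hm
        injection hm with h
        exact h.symm
      · intro u y hy
        obtain ⟨hc, hm⟩ := hm'some u (lf x) y hy
        rw [hll x] at hc
        rw [← hc, (hr u).1] at hm
        injection hm with h
        exact h.symm
      · rw [(hm' (lf x) x).1 (by rw [hrl x])]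
        exact (hl x).1
    · refine ⟨⟨?_, ?_⟩, ?_⟩
      · intro u y hy
        obtain ⟨hc, hm⟩ := hm'some (rf x) u y hy
        rw [hrr x] at hc
        rw [hc, (hl u).1] at hm
        injection hm with h
        exact h.symm
      · intro u y hy
        obtain ⟨hc, hm⟩ := hm'some u (rf x) y hy
        rw [hlr x] at hc
        rw [← hc, (hr u).1] at hm
        injection hm with h
        exact h.symm
      · rw [(hm' x (rf x)).1 (by rw [hlr x])]
        exact (hr x).1
  constructor
  · constructor
    · -- semigroupoid
      intro x y z hcase
      -- reduce all cases to rf x = lf y ∧ rf y = lf z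
      have key : rf x = lf y ∧ rf y = lf z := by
        rcases hcase with h1 | h1 | h1
        · simp only [ob, Option.bind_some] at h1
          obtain ⟨t, ht⟩ := Option.isSome_iff_exists.mp h1
          rcases hv : m' y z with _ | v
          · rw [hv] at ht; simp at ht
          rw [hv] at ht; simp only [Option.bind_some] at ht
          obtain ⟨hyz, hmyz⟩ := hm'some y z v hv
          obtain ⟨hxv, -⟩ := hm'some x v t ht
          exact ⟨by rw [hxv, hlprod y z v hmyz], hyz⟩
        · simp only [ob] at h1
          obtain ⟨t, ht⟩ := Option.isSome_iff_exists.mp h1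
          rcases hw : m' x y with _ | w
          · rw [hw] at ht; simp at ht
          rw [hw] at ht; simp only [Option.bind_some] at ht
          obtain ⟨hxy, hmxy⟩ := hm'some x y w hw
          obtain ⟨hwz, -⟩ := hm'some w z t ht
          exact ⟨hxy, by rw [← hwz, hrprod x y w hmxy]⟩
        · obtain ⟨h1a, h1b⟩ := h1
          obtain ⟨w, hw⟩ := Option.isSome_iff_exists.mp h1a
          obtain ⟨v, hv⟩ := Option.isSome_iff_exists.mp h1b
          exact ⟨(hm'some x y w hw).1, (hm'some y z v hv).1⟩
      obtain ⟨hxy, hyz⟩ := key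
      obtain ⟨w, hw', hw⟩ := hm'def x y hxy
      obtain ⟨v, hv', hv⟩ := hm'def y z hyz
      obtain ⟨t, ht1, ht2⟩ := sg_assoc hsg hw hv
      have hxv : m' x v = some t := by
        rw [(hm' x v).1 (by rw [hxy, hlprod y z v hv]), ht1]
      have hwz : m' w z = some t := by
        rw [(hm' w z).1 (by rw [hrprod x y w hw, hyz]), ht2]
      refine ⟨?_, ?_, ?_⟩ <;>
        simp [ob, hw', hv', hxv, hwz]
    · -- existence of effective units
      intro x
      exact ⟨⟨lf x, (heff x).1⟩, ⟨rf x, (heff x).2⟩⟩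
  · exact heff

end PaperMagmoid
end

section
/- Let S be an inverse semigroup, writing x⁻¹ for the unique element with xx⁻¹x = x and x⁻¹xx⁻¹ = x⁻¹. Define a partial binary operation · on S by: (x·y)↓ if and only if x⁻¹x = yy⁻¹, in which case x·y = xy. Then S with the operation · is a groupoid. -/
namespace PaperMagmoid

variable {P : Type*}

section InvSemiAux
variable {S : Type*} [Semigroup S] (inv : S → S)
variable (hinv : ∀ x : S, x * inv x * x = x ∧ inv x * x * inv x = inv x)
variable (huniq : ∀ x y : S, x * y * x = x → y * x * y = y → y = inv x)

include hinv huniq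

lemma aux_inv_inv (x : S) : inv (inv x) = x :=
  (huniq (inv x) x (hinv x).2 (hinv x).1).symm

omit hinv in
lemma aux_idem_inv {i : S} (hi : i * i = i) : inv i = i :=
  (huniq i i (by rw [hi, hi]) (by rw [hi, hi])).symm

lemma aux_idem_mul {e f : S} (he : e * e = e) (hf : f * f = f) :
    (e * f) * (e * f) = e * f := by
  set a := inv (e * f) with ha
  have h1 : e * (f * (a * (e * f))) = e * f := by
    have := (hinv (e * f)).1; simpa only [mul_assoc] using this
  have h2t : ∀ t : S, a * (e * (f * (a * t))) = a * t := by
    intro t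
    have := congrArg (· * t) (hinv (e * f)).2
    simpa only [mul_assoc] using this
  have heL : ∀ t : S, e * (e * t) = e * t := fun t => by rw [← mul_assoc, he]
  have hfL : ∀ t : S, f * (f * t) = f * t := fun t => by rw [← mul_assoc, hf]
  have hfa : f * a * e = a := by
    apply huniq (e * f) (f * a * e)
    · show (e * f) * (f * a * e) * (e * f) = e * f
      simp only [mul_assoc, heL, hfL, h1]
    · show (f * a * e) * (e * f) * (f * a * e) = f * a * e
      simp only [mul_assoc, heL, hfL, h2t]
  have haa : a * a = a := by
    have : (f * a * e) * (f * a * e) = f * a * e := by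
      simp only [mul_assoc, h2t]
    rwa [hfa] at this
  have : e * f = a := by
    have h3 : inv a = a := aux_idem_inv inv huniq haa
    have h4 : inv a = e * f := by rw [ha, aux_inv_inv inv hinv huniq]
    rw [← h3, h4]
  rw [this]; exact haa

lemma aux_comm {e f : S} (he : e * e = e) (hf : f * f = f) :
    e * f = f * e := by
  have hef : (e * f) * (e * f) = e * f := aux_idem_mul inv hinv huniq he hf
  have hfe : (f * e) * (f * e) = f * e := aux_idem_mul inv hinv huniq hf he
  have h1 : (e * f) * (f * e) * (e * f) = e * f := by
    have hef' : e * (f * (e * f)) = e * f := by simpa only [mul_assoc] using hef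
    have heL : ∀ t : S, e * (e * t) = e * t := fun t => by rw [← mul_assoc, he]
    have hfL : ∀ t : S, f * (f * t) = f * t := fun t => by rw [← mul_assoc, hf]
    simp only [mul_assoc, heL, hfL, hef']
  have h2 : (f * e) * (e * f) * (f * e) = f * e := by
    have hfe' : f * (e * (f * e)) = f * e := by simpa only [mul_assoc] using hfe
    have heL : ∀ t : S, e * (e * t) = e * t := fun t => by rw [← mul_assoc, he]
    have hfL : ∀ t : S, f * (f * t) = f * t := fun t => by rw [← mul_assoc, hf]
    simp only [mul_assoc, heL, hfL, hfe']
  have := huniq (e * f) (f * e) h1 h2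
  rw [this, aux_idem_inv inv huniq hef]

lemma aux_inv_mul (x y : S) : inv (x * y) = inv y * inv x := by
  set a := inv x; set b := inv y
  have hax : (a * x) * (a * x) = a * x := by
    have := congrArg (· * x) (hinv x).2; simpa only [mul_assoc] using this
  have hyb : (y * b) * (y * b) = y * b := by
    have := congrArg (· * b) (hinv y).1; simpa only [mul_assoc] using this
  have hc : (y * b) * (a * x) = (a * x) * (y * b) :=
    aux_comm inv hinv huniq hyb hax
  have hcT : ∀ t : S, y * (b * (a * (x * t))) = a * (x * (y * (b * t))) := by
    intro t; have := congrArg (· * t) hc; simpa only [mul_assoc] using this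
  have hcT' : ∀ t : S, a * (x * (y * (b * t))) = y * (b * (a * (x * t))) :=
    fun t => (hcT t).symm
  have hx1 : ∀ t : S, x * (a * (x * t)) = x * t := by
    intro t; have := congrArg (· * t) (hinv x).1; simpa only [mul_assoc] using this
  have hy1 : y * (b * y) = y := by simpa only [mul_assoc] using (hinv y).1
  have hb1 : ∀ t : S, b * (y * (b * t)) = b * t := by
    intro t; have := congrArg (· * t) (hinv y).2; simpa only [mul_assoc] using this
  have ha1 : a * (x * a) = a := by simpa only [mul_assoc] using (hinv x).2
  symm
  apply huniq (x * y) (b * a)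
  · show (x * y) * (b * a) * (x * y) = x * y
    simp only [mul_assoc]
    rw [hcT, hy1, hx1]
  · show (b * a) * (x * y) * (b * a) = b * a
    simp only [mul_assoc]
    rw [hcT', hb1, ha1]
end InvSemiAux

/-- An inverse semigroup `S`, with multiplication restricted to
the products `x·y` with `x⁻¹x = yy⁻¹`, is a groupoid. -/
theorem inverseSemigroup_restricted_is_groupoid {S : Type*} [Semigroup S]
    (inv : S → S)
    (hinv : ∀ x : S, x * inv x * x = x ∧ inv x * x * inv x = inv x)
    (huniq : ∀ x y : S, x * y * x = x → y * x * y = y → y = inv x)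
    (m' : S → S → Option S)
    (hm' : ∀ x y : S, (inv x * x = y * inv y → m' x y = some (x * y)) ∧
      (inv x * x ≠ y * inv y → m' x y = none)) :
    IsGroupoid m' :=
  by
  have hII : ∀ x : S, inv (inv x) = x := aux_inv_inv inv hinv huniq
  have hIM : ∀ x y : S, inv (x * y) = inv y * inv x := aux_inv_mul inv hinv huniq
  have hidemInv : ∀ i : S, i * i = i → inv i = i := fun _ hi => aux_idem_inv inv huniq hi
  have hdi : ∀ x : S, (inv x * x) * (inv x * x) = inv x * x := by
    intro x
    have := congrArg (· * x) (hinv x).2; simpa only [mul_assoc] using this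
  have hri : ∀ x : S, (x * inv x) * (x * inv x) = x * inv x := by
    intro x
    have := congrArg (· * inv x) (hinv x).1; simpa only [mul_assoc] using this
  have hchar : ∀ x y z : S, m' x y = some z →
      inv x * x = y * inv y ∧ z = x * y := by
    intro x y z h
    by_cases hc : inv x * x = y * inv y
    · refine ⟨hc, ?_⟩
      rw [(hm' x y).1 hc] at h
      exact (Option.some.inj h).symm
    · rw [(hm' x y).2 hc] at h; exact absurd h (by simp)
  have hmk : ∀ x y : S, inv x * x = y * inv y → m' x y = some (x * y) :=
    fun x y h => (hm' x y).1 h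
  have hdprod : ∀ x y : S, inv x * x = y * inv y →
      inv (x * y) * (x * y) = inv y * y := by
    intro x y h
    have hc : inv x * (x * y) = y := by
      have h1 : (inv x * x) * y = y := by
        rw [h, mul_assoc, ← mul_assoc, (hinv y).1]
      rw [← mul_assoc]; exact h1
    rw [hIM, mul_assoc, hc]
  have hrprod : ∀ x y : S, inv x * x = y * inv y →
      (x * y) * inv (x * y) = x * inv x := by
    intro x y h
    have hc : (x * y) * inv y = x := by
      rw [mul_assoc, ← h, ← mul_assoc, (hinv x).1]
    rw [hIM, ← mul_assoc, hc]
  have hunit : ∀ e : S, e * e = e → IsTwoSidedUnit m' e := by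
    intro e he
    have hie : inv e = e := hidemInv e he
    constructor
    · intro x y h
      obtain ⟨hc, hy⟩ := hchar e x y h
      rw [hie, he] at hc
      rw [hy, hc]; exact (hinv x).1
    · intro x y h
      obtain ⟨hc, hy⟩ := hchar x e y h
      rw [hie, he] at hc
      rw [hy, ← hc, ← mul_assoc]; exact (hinv x).1
  have obL : ∀ (x : S) (o : Option S),
      ob m' (some x) o = o.bind (fun q => m' x q) := fun _ _ => rfl
  have obR : ∀ (o : Option S) (z : S),
      ob m' o (some z) = o.bind (fun p => m' p z) := by
    intro o z; cases o <;> rfl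
  have hmaster : ∀ x y z : S, inv x * x = y * inv y → inv y * y = z * inv z →
      m' x y = some (x * y) ∧ m' y z = some (y * z) ∧
      m' x (y * z) = some (x * (y * z)) ∧ m' (x * y) z = some (x * (y * z)) := by
    intro x y z h1 h2
    refine ⟨hmk x y h1, hmk y z h2, ?_, ?_⟩
    · refine hmk x (y * z) ?_
      rw [hrprod y z h2]; exact h1
    · have hc : inv (x * y) * (x * y) = z * inv z := by
        rw [hdprod x y h1]; exact h2
      rw [hmk (x * y) z hc, mul_assoc]
  have hsg : IsSemigroupoid m' := by
    intro x y z h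
    have key : inv x * x = y * inv y ∧ inv y * y = z * inv z := by
      rcases h with h | h | ⟨ha, hb⟩
      · rw [obL] at h
        cases hyz : m' y z with
        | none => rw [hyz] at h; simp at h
        | some w =>
          rw [hyz] at h
          obtain ⟨v, hv⟩ := Option.isSome_iff_exists.mp h
          obtain ⟨hc2, hw⟩ := hchar y z w hyz
          obtain ⟨hc1, _⟩ := hchar x w v hv
          subst hw
          rw [hrprod y z hc2] at hc1
          exact ⟨hc1, hc2⟩
      · rw [obR] at h
        cases hxy : m' x y with
        | none => rw [hxy] at h; simp at h
        | some w =>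
          rw [hxy] at h
          obtain ⟨v, hv⟩ := Option.isSome_iff_exists.mp h
          obtain ⟨hc1, hw⟩ := hchar x y w hxy
          obtain ⟨hc2, _⟩ := hchar w z v hv
          subst hw
          rw [hdprod x y hc1] at hc2
          exact ⟨hc1, hc2⟩
      · obtain ⟨w, hw⟩ := Option.isSome_iff_exists.mp ha
        obtain ⟨u, hu⟩ := Option.isSome_iff_exists.mp hb
        exact ⟨(hchar x y w hw).1, (hchar y z u hu).1⟩
    obtain ⟨h1, h2⟩ := key
    obtain ⟨hxy, hyz, hx_yz, hxy_z⟩ := hmaster x y z h1 h2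
    have e1 : ob m' (some x) (m' y z) = some (x * (y * z)) := by
      rw [obL, hyz]; exact hx_yz
    have e2 : ob m' (m' x y) (some z) = some (x * (y * z)) := by
      rw [obR, hxy]; exact hxy_z
    refine ⟨by rw [e1]; rfl, by rw [e2]; rfl, by rw [e1, e2]⟩
  have hLunit : ∀ x : S, m' (x * inv x) x = some x := by
    intro x
    have hc : inv (x * inv x) * (x * inv x) = x * inv x := by
      rw [hidemInv _ (hri x)]; exact hri x
    have := hmk (x * inv x) x hc
    rwa [(hinv x).1] at this
  have hRunit : ∀ x : S, m' x (inv x * x) = some x := by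
    intro x
    have hc : inv x * x = (inv x * x) * inv (inv x * x) := by
      rw [hidemInv _ (hdi x)]; exact (hdi x).symm
    have := hmk x (inv x * x) hc
    rwa [← mul_assoc, (hinv x).1] at this
  have hx1 : ∀ x : S, m' x (inv x) = some (x * inv x) := by
    intro x
    refine hmk x (inv x) ?_
    rw [hII x]
  have hx2 : ∀ x : S, m' (inv x) x = some (inv x * x) := by
    intro x
    refine hmk (inv x) x ?_
    rw [hII x]
  refine ⟨⟨hsg, ?_⟩, ?_⟩
  · intro x
    constructor
    · exact ⟨x * inv x, hunit _ (hri x), hLunit x⟩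
    · exact ⟨inv x * x, hunit _ (hdi x), hRunit x⟩
  · intro x
    refine ⟨inv x, ⟨?_, ?_, ?_, ?_, ?_, ?_⟩, ?_, ?_⟩
    · rw [hx1 x]; rfl
    · rw [hx2 x]; rfl
    · rw [obR, hx1 x]
      exact hLunit x
    · rw [obL, hx2 x]
      exact hRunit x
    · rw [obR, hx2 x]
      show m' (inv x * x) (inv x) = some (inv x)
      have hc : inv (inv x * x) * (inv x * x) = inv x * inv (inv x) := by
        rw [hidemInv _ (hdi x), hII x]; exact hdi x
      have := hmk (inv x * x) (inv x) hc
      rwa [(hinv x).2] at this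
    · rw [obL, hx1 x]
      show m' (inv x) (x * inv x) = some (inv x)
      have hc : inv (inv x) * inv x = (x * inv x) * inv (x * inv x) := by
        rw [hII x, hidemInv _ (hri x)]; exact (hri x).symm
      have := hmk (inv x) (x * inv x) hc
      rwa [← mul_assoc, (hinv x).2] at this
    · intro u hu
      rw [hx1 x] at hu
      rw [← Option.some.inj hu]
      exact hunit _ (hri x)
    · intro v hv
      rw [hx2 x] at hv
      rw [← Option.some.inj hv]
      exact hunit _ (hdi x)


end PaperMagmoid
end

section
/- Let P be a left skew-groupoid and let x ∈ P. Then x has exactly one strong right preinverse. -/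
namespace PaperMagmoid

variable {P : Type*}

/-- In a left skew-groupoid, every element has exactly one
strong right preinverse. -/
theorem leftSkewGroupoid_strongRightPreinverse_unique {P : Type*}
    (m : P → P → Option P) (h : IsLeftSkewGroupoid m) (x : P) :
    ∃! x', IsStrongRightPreinverse m x x' := by
  obtain ⟨⟨⟨_, hls⟩, _⟩, hex, heq⟩ := h
  obtain ⟨a, ha⟩ := hex x
  refine ⟨a, ha, fun b hb => ?_⟩
  obtain ⟨⟨ha1, ha2, _, ha4⟩, hru1, hru2⟩ := ha
  have hab : m a x = m b x := heq x a b ⟨⟨ha1, ha2, by assumption, ha4⟩, hru1, hru2⟩ hb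
  obtain ⟨⟨hb1, hb2, _, _⟩, _, _⟩ := hb
  obtain ⟨u, hu⟩ := Option.isSome_iff_exists.mp ha1
  have hassoc := hls b x a hb2 ha1
  obtain ⟨h1, h2, h3⟩ := hassoc
  rw [hu] at h3
  simp [ob] at h3
  simp [ob] at ha4
  rw [← hab, ha4] at h3
  exact (hru1 u hu b a h3).symm

end PaperMagmoid
end
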